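/- For each i = 1,…,d, let 𝒵_i ⊆ L^q(Ω; ℝ₊) (1/p + 1/q = 1) be a family of nonnegative random variables such that E(−ξζ) ≤ r_i(ξ)·E(ζ) for every ξ ∈ L^p(Ω; ℝ) and every ζ ∈ 𝒵_i (as holds when r_i admits the dual representation r_i(ξ) = sup_{ζ∈𝒵_i} E(−ξζ)/E(ζ)). Let 𝒵 be any nonempty family of random vectors Z = (ζ₁,…,ζ_d) ∈ L^q(Ω; ℝ₊^d) with ζ_i ∈ 𝒵_i for each i. Then for every set-valued portfolio 𝐗 with a p-integrable selection, ρ_s(𝐗) ⊆ ρ_𝒵(𝐗), where ρ_𝒵(𝐗) = ⋂_{Z ∈ 𝒵, u ∈ ℝ₊^d} {x ∈ ℝ^d : ⟨x, u ⊙ E Z⟩ ≥ −E h_𝐗(u ⊙ Z)} with coordinatewise product u ⊙ Z. -/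

import Mathlib

open MeasureTheory Set Filter
open scoped Pointwise ENNReal RealInnerProductSpace

noncomputable section

/-- `ℝ^d` with the Euclidean norm. -/
abbrev Vec (d : ℕ) := EuclideanSpace ℝ (Fin d)

/-- Effros measurability of a set-valued map: `{ω : X(ω) ∩ G ≠ ∅}` is measurable
for every open `G`. -/
def EffrosMeasurable {Ω : Type*} [MeasurableSpace Ω] {d : ℕ} (X : Ω → Set (Vec d)) : Prop :=
  ∀ G : Set (Vec d), IsOpen G → MeasurableSet {ω | (X ω ∩ G).Nonempty}

/-- A set-valued portfolio: an Effros-measurable map with nonempty closed convex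
lower-set values. -/
structure IsPortfolio {Ω : Type*} [MeasurableSpace Ω] {d : ℕ} (X : Ω → Set (Vec d)) : Prop where
  effros : EffrosMeasurable X
  nonempty : ∀ ω, (X ω).Nonempty
  isClosed : ∀ ω, IsClosed (X ω)
  convex : ∀ ω, Convex ℝ (X ω)
  lower : ∀ ω, ∀ x ∈ X ω, ∀ y : Vec d, (∀ i, y i ≤ x i) → y ∈ X ω

/-- A coherent risk measure on `L^p(Ω; ℝ)` with values in `ℝ ∪ {+∞} ⊆ EReal`:
monotone (antitone in the gain), cash invariant, subadditive and positively homogeneous. -/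
structure IsCoherent {Ω : Type*} [MeasurableSpace Ω] (μ : Measure Ω) (p : ℝ≥0∞)
    (r : (Ω → ℝ) → EReal) : Prop where
  ne_bot : ∀ ξ : Ω → ℝ, MemLp ξ p μ → r ξ ≠ ⊥
  mono : ∀ ξ η : Ω → ℝ, MemLp ξ p μ → MemLp η p μ → (∀ᵐ ω ∂μ, ξ ω ≤ η ω) → r η ≤ r ξ
  cash : ∀ ξ : Ω → ℝ, MemLp ξ p μ → ∀ c : ℝ, r (fun ω => ξ ω + c) = r ξ - (c : EReal)
  subadd : ∀ ξ η : Ω → ℝ, MemLp ξ p μ → MemLp η p μ →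
    r (fun ω => ξ ω + η ω) ≤ r ξ + r η
  homog : ∀ ξ : Ω → ℝ, MemLp ξ p μ → ∀ c : ℝ, 0 < c →
    r (fun ω => c * ξ ω) = (c : EReal) * r ξ

/-- The selection risk measure `ρ_{s,0}(𝐗)`: the set of deterministic `x ∈ ℝ^d`
for which `𝐗 + x` has a selection with all individually acceptable components. -/
def rho0 {Ω : Type*} [MeasurableSpace Ω] (μ : Measure Ω) (p : ℝ≥0∞) {d : ℕ}
    (r : Fin d → (Ω → ℝ) → EReal) (X : Ω → Set (Vec d)) : Set (Vec d) :=
  {x | ∃ ξ : Ω → Vec d, MemLp ξ p μ ∧ (∀ᵐ ω ∂μ, ξ ω ∈ X ω) ∧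
        ∀ i, r i (fun ω => ξ ω i + x i) ≤ 0}

/-- The support function `h_M(u) = sup{⟨u,x⟩ : x ∈ M}`, with values in `EReal`. -/
def suppFn {d : ℕ} (M : Set (Vec d)) (u : Vec d) : EReal :=
  ⨆ x ∈ M, ((⟪u, x⟫ : ℝ) : EReal)

/-- The lower-bound risk measure `ρ_𝒵(𝐗)` of (4.2)/(4.3): the intersection over
`Z ∈ 𝒵` and `u ∈ ℝ₊^d` of the half-spaces `{x : ⟨x, u ⊙ EZ⟩ ≥ −E h_𝐗(u ⊙ Z)}`;
a constraint is vacuous when `E h_𝐗(u ⊙ Z) = +∞`, i.e. when `h_𝐗(u ⊙ Z)` fails to be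
a.s. finite with integrable (real-valued) version. -/
def rhoZ {Ω : Type*} [MeasurableSpace Ω] (μ : Measure Ω) {d : ℕ}
    (𝒵 : Set (Ω → Vec d)) (X : Ω → Set (Vec d)) : Set (Vec d) :=
  {x | ∀ Z ∈ 𝒵, ∀ u : Vec d, (∀ i, 0 ≤ u i) →
    (∀ᵐ ω ∂μ, suppFn (X ω) (WithLp.toLp 2 (fun i => u i * Z ω i) : Vec d) ≠ ⊤) →
    Integrable (fun ω => (suppFn (X ω) (WithLp.toLp 2 (fun i => u i * Z ω i) : Vec d)).toReal) μ →
    -∫ ω, (suppFn (X ω) (WithLp.toLp 2 (fun i => u i * Z ω i) : Vec d)).toReal ∂μ ≤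
      ⟪x, (WithLp.toLp 2 (fun i => u i * ∫ ω, Z ω i ∂μ) : Vec d)⟫}

/-!
If `x ∈ ρ_{s,0}(𝐗)` with acceptable selection `ξ`, the dual inequality applied to `ξᵢ + xᵢ`
gives `-xᵢ E ζᵢ ≤ E(ξᵢ ζᵢ)`. Weighting by `uᵢ ≥ 0` and summing,
`-⟨x, u ⊙ EZ⟩ ≤ E⟨u ⊙ Z, ξ⟩ ≤ E h_𝐗(u ⊙ Z)`, the last step because `ξ` is a selection.
So `ρ_{s,0}(𝐗) ⊆ ρ_𝒵(𝐗)`, and the inclusion passes to the closure since `ρ_𝒵(𝐗)` is an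
intersection of closed half-spaces.
-/

section SupportFunction

variable {d : ℕ}

theorem coe_inner_le_suppFn {M : Set (Vec d)} {x : Vec d} (hx : x ∈ M) (u : Vec d) :
    ((⟪u, x⟫ : ℝ) : EReal) ≤ suppFn M u :=
  le_iSup₂ (f := fun z (_ : z ∈ M) => ((⟪u, z⟫ : ℝ) : EReal)) x hx

theorem inner_le_toReal_suppFn {M : Set (Vec d)} {x u : Vec d} (hx : x ∈ M)
    (hM : suppFn M u ≠ ⊤) : ⟪u, x⟫ ≤ (suppFn M u).toReal := by
  have hle := coe_inner_le_suppFn hx u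
  have hM_bot : suppFn M u ≠ ⊥ := ne_bot_of_le_ne_bot (EReal.coe_ne_bot _) hle
  rwa [← EReal.coe_toReal hM hM_bot, EReal.coe_le_coe_iff] at hle

theorem inner_toLp_mul (x : Vec d) (u a : Fin d → ℝ) :
    ⟪x, (WithLp.toLp 2 (fun i => u i * a i) : Vec d)⟫ = ∑ i, u i * (x i * a i) := by
  simp only [PiLp.inner_apply, RCLike.inner_apply, conj_trivial]
  exact Finset.sum_congr rfl fun i _ => by ring

end SupportFunction

section Integrals

variable {Ω : Type*} [MeasurableSpace Ω] {μ : Measure Ω} {p q : ℝ≥0∞}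
  [ENNReal.HolderConjugate p q]

theorem neg_mul_integral_le_integral_mul_of_risk_nonpos [IsFiniteMeasure μ]
    {r : (Ω → ℝ) → EReal} {ξ ζ : Ω → ℝ}
    (hξ : MemLp ξ p μ) (hζ : MemLp ζ q μ) (hζ_nonneg : ∀ᵐ ω ∂μ, 0 ≤ ζ ω)
    (hdual : ∀ η : Ω → ℝ, MemLp η p μ →
      ((∫ ω, -η ω * ζ ω ∂μ : ℝ) : EReal) ≤ r η * ((∫ ω, ζ ω ∂μ : ℝ) : EReal))
    (c : ℝ) (hacc : r (fun ω => ξ ω + c) ≤ 0) :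
    -(c * ∫ ω, ζ ω ∂μ) ≤ ∫ ω, ξ ω * ζ ω ∂μ := by
  have hdual_nonpos : ∫ ω, -(ξ ω + c) * ζ ω ∂μ ≤ 0 := by
    refine EReal.coe_nonpos.mp ((hdual _ (hξ.add (memLp_const c))).trans ?_)
    exact mul_nonpos_of_nonpos_of_nonneg hacc
      (EReal.coe_nonneg.mpr (integral_nonneg_of_ae hζ_nonneg))
  have hsplit : ∫ ω, -(ξ ω + c) * ζ ω ∂μ = -(∫ ω, ξ ω * ζ ω ∂μ + c * ∫ ω, ζ ω ∂μ) := by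
    have hξζ : Integrable (fun ω => ξ ω * ζ ω) μ := hξ.integrable_mul hζ
    have hζ_int : Integrable ζ μ := hζ.integrable (ENNReal.HolderConjugate.one_le q p)
    simp only [neg_mul, add_mul, integral_neg]
    rw [integral_add hξζ (hζ_int.const_mul c), integral_const_mul]
  linarith

variable {d : ℕ}

theorem sum_mul_integral_le_integral_suppFn {X : Ω → Set (Vec d)} {ξ Z : Ω → Vec d}
    {u : Vec d} (hξ : MemLp ξ p μ) (hξX : ∀ᵐ ω ∂μ, ξ ω ∈ X ω)
    (hZ : ∀ i, MemLp (fun ω => Z ω i) q μ)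
    (hfin : ∀ᵐ ω ∂μ, suppFn (X ω) (WithLp.toLp 2 (fun i => u i * Z ω i) : Vec d) ≠ ⊤)
    (hint : Integrable
      (fun ω => (suppFn (X ω) (WithLp.toLp 2 (fun i => u i * Z ω i) : Vec d)).toReal) μ) :
    ∑ i, u i * ∫ ω, ξ ω i * Z ω i ∂μ ≤
      ∫ ω, (suppFn (X ω) (WithLp.toLp 2 (fun i => u i * Z ω i) : Vec d)).toReal ∂μ := by
  have hmul : ∀ i, Integrable (fun ω => u i * (ξ ω i * Z ω i)) μ := fun i =>
    ((hξ.eval_piLp i).integrable_mul (hZ i)).const_mul (u i)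
  have hpointwise : ∀ᵐ ω ∂μ, ∑ i, u i * (ξ ω i * Z ω i) ≤
      (suppFn (X ω) (WithLp.toLp 2 (fun i => u i * Z ω i) : Vec d)).toReal := by
    filter_upwards [hξX, hfin] with ω hmem hne
    rw [← inner_toLp_mul, real_inner_comm]
    exact inner_le_toReal_suppFn hmem hne
  calc ∑ i, u i * ∫ ω, ξ ω i * Z ω i ∂μ = ∫ ω, ∑ i, u i * (ξ ω i * Z ω i) ∂μ := by
        simp only [integral_finsetSum _ fun i _ => hmul i, integral_const_mul]
    _ ≤ _ := integral_mono_ae (integrable_finsetSum _ fun i _ => hmul i) hint hpointwise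

theorem isClosed_rhoZ (𝒵 : Set (Ω → Vec d)) (X : Ω → Set (Vec d)) :
    IsClosed (rhoZ μ 𝒵 X) := by
  simp only [rhoZ, ofPred_forall]
  exact isClosed_iInter fun _ => isClosed_iInter fun _ => isClosed_iInter fun _ =>
    isClosed_iInter fun _ => isClosed_iInter fun _ => isClosed_iInter fun _ =>
      isClosed_le continuous_const (continuous_id.inner continuous_const)

theorem rho0_subset_rhoZ [IsFiniteMeasure μ] {r : Fin d → (Ω → ℝ) → EReal}
    {𝒵 : Set (Ω → Vec d)}
    (h𝒵 : ∀ Z ∈ 𝒵, ∀ i, MemLp (fun ω => Z ω i) q μ ∧ (∀ᵐ ω ∂μ, 0 ≤ Z ω i) ∧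
      ∀ ξ : Ω → ℝ, MemLp ξ p μ →
        ((∫ ω, -ξ ω * Z ω i ∂μ : ℝ) : EReal) ≤ r i ξ * ((∫ ω, Z ω i ∂μ : ℝ) : EReal))
    (X : Ω → Set (Vec d)) : rho0 μ p r X ⊆ rhoZ μ 𝒵 X := by
  rintro x ⟨ξ, hξ, hξX, hacc⟩ Z hZ u hu hfin hint
  have hcomponent : ∀ i, -(x i * ∫ ω, Z ω i ∂μ) ≤ ∫ ω, ξ ω i * Z ω i ∂μ := fun i =>
    have ⟨hZi, hZi_nonneg, hdual⟩ := h𝒵 Z hZ i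
    neg_mul_integral_le_integral_mul_of_risk_nonpos (hξ.eval_piLp i) hZi hZi_nonneg hdual (x i)
      (hacc i)
  have hselection := sum_mul_integral_le_integral_suppFn hξ hξX (fun i => (h𝒵 Z hZ i).1)
    hfin hint
  calc -∫ ω, (suppFn (X ω) (WithLp.toLp 2 (fun i => u i * Z ω i) : Vec d)).toReal ∂μ
      ≤ -∑ i, u i * ∫ ω, ξ ω i * Z ω i ∂μ := neg_le_neg hselection
    _ = ∑ i, u i * -∫ ω, ξ ω i * Z ω i ∂μ := by simp only [mul_neg, Finset.sum_neg_distrib]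
    _ ≤ ∑ i, u i * (x i * ∫ ω, Z ω i ∂μ) :=
        Finset.sum_le_sum fun i _ => mul_le_mul_of_nonneg_left (by linarith [hcomponent i]) (hu i)
    _ = ⟪x, (WithLp.toLp 2 (fun i => u i * ∫ ω, Z ω i ∂μ) : Vec d)⟫ := (inner_toLp_mul _ _ _).symm

end Integrals

theorem statement7 {Ω : Type*} [MeasurableSpace Ω] (μ : Measure Ω) [IsProbabilityMeasure μ]
    {d : ℕ} (p q : ℝ≥0∞) (hpq : 1/p + 1/q = 1)
    (r : Fin d → (Ω → ℝ) → EReal)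
    (𝒵i : Fin d → Set (Ω → ℝ))
    (h𝒵i : ∀ i, ∀ ζ ∈ 𝒵i i, MemLp ζ q μ ∧ (∀ᵐ ω ∂μ, 0 ≤ ζ ω) ∧
      ∀ ξ : Ω → ℝ, MemLp ξ p μ →
        ((∫ ω, -ξ ω * ζ ω ∂μ : ℝ) : EReal) ≤ r i ξ * ((∫ ω, ζ ω ∂μ : ℝ) : EReal))
    (𝒵 : Set (Ω → Vec d))
    (h𝒵 : ∀ Z ∈ 𝒵, MemLp Z q μ ∧ ∀ i, (fun ω => Z ω i) ∈ 𝒵i i)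
    (X : Ω → Set (Vec d)) :
    closure (rho0 μ p r X) ⊆ rhoZ μ 𝒵 X := by
  have : ENNReal.HolderConjugate p q :=
    ENNReal.holderConjugate_iff.2 (by simpa only [one_div] using hpq)
  exact closure_minimal (rho0_subset_rhoZ (fun Z hZ i => h𝒵i i _ ((h𝒵 Z hZ).2 i)) X)
    (isClosed_rhoZ 𝒵 X)
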